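/- arXiv:math/0507558 — 3 statements merged into one kernel-verified Lean document; each statement's English description precedes it below -/
import Mathlib

section
/- Let p be a prime with p ≡ 1 (mod 4), and let s₀, e be positive integers coprime to p. Then there exist infinitely many primes l such that (i) the multiplicative order of p^s modulo l equals e for some positive integer s divisible by s₀, and (ii) e divides l − 1. -/
/-!
Let `m = s₀ e`. If `l ∤ n` is a prime factor of `Φₙ(p^φ(n))`, then `p^φ(n)` has order exactly `n`
modulo `l`; for `n = m q₁ q₂` with distinct primes `q₁, q₂ > p`, which is prime to `p` and not a
prime power, `Φₙ(p^φ(n)) ≡ Φₙ(1) = 1 [MOD n]` guarantees `l ∤ n`. Hence `m` divides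
`d = ord_l(p)`, and `s = d / e` is a multiple of `s₀` with `ord_l(p^s) = e`, while `e ∣ d ∣ l - 1`.
Taking `q₁` large makes `l > n ≥ q₁` large.
-/

open Polynomial Nat

theorem prime_pow_ne_of_two_prime_dvd {q₁ q₂ n : ℕ} (hq₁ : q₁.Prime) (hq₂ : q₂.Prime)
    (hne : q₁ ≠ q₂) (h₁ : q₁ ∣ n) (h₂ : q₂ ∣ n) {q : ℕ} (hq : q.Prime) (k : ℕ) : q ^ k ≠ n := by
  rintro rfl
  exact hne <| ((prime_dvd_prime_iff_eq hq₁ hq).1 (hq₁.dvd_of_dvd_pow h₁)).trans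
    ((prime_dvd_prime_iff_eq hq₂ hq).1 (hq₂.dvd_of_dvd_pow h₂)).symm

theorem exists_prime_orderOf_pow_totient_eq {a n : ℕ} (ha : 1 < a)
    (hn : ∀ {q : ℕ}, q.Prime → ∀ k : ℕ, q ^ k ≠ n) (han : a.Coprime n) :
    ∃ l : ℕ, l.Prime ∧ orderOf ((a : ZMod l) ^ φ n) = n := by
  have hn0 : n ≠ 0 := by rintro rfl; exact ha.ne' (Nat.coprime_zero_right _ |>.1 han)
  have hn1 : 1 < n := one_lt_iff_ne_zero_and_ne_one.2 ⟨hn0, (hn prime_two 0).symm⟩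
  set b := a ^ φ n
  set M := (cyclotomic n ℤ).eval (b : ℤ)
  have hb : 2 ≤ b := ha.trans_le (le_self_pow (totient_pos.2 (by omega)).ne' a)
  have hM : 1 < M.natAbs :=
    lt_of_le_of_lt (le_sub_one_of_lt hb) (sub_one_lt_natAbs_cyclotomic_eval hn1 (by omega))
  have hMn : (n : ℤ) ∣ M - 1 := by
    have := sub_dvd_eval_sub (b : ℤ) 1 (cyclotomic n ℤ)
    rw [eval_one_cyclotomic_not_prime_pow hn] at this
    exact (Nat.modEq_iff_dvd.1 (Nat.ModEq.pow_totient han).symm).trans (by exact_mod_cast this)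
  set l := M.natAbs.minFac
  have hl : l.Prime := minFac_prime hM.ne'
  have hlM : (l : ℤ) ∣ M := Int.natCast_dvd.2 (minFac_dvd _)
  have hln : ¬ l ∣ n := fun h => hl.not_dvd_one <| Int.natCast_dvd_natCast.1 <| by
    simpa using dvd_sub hlM ((Int.natCast_dvd_natCast.2 h).trans hMn)
  have := Fact.mk hl
  have : NeZero (n : ZMod l) := NeZero.of_not_dvd (ZMod l) hln
  have hroot : IsRoot (cyclotomic n (ZMod l)) ((a : ZMod l) ^ φ n) := by
    rw [← map_cyclotomic_int, IsRoot.def, show (a : ZMod l) ^ φ n = ((b : ℤ) : ZMod l) by simp [b],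
      eval_intCast_map, eq_intCast, ZMod.intCast_zmod_eq_zero_iff_dvd]
    exact hlM
  exact ⟨l, hl, (isRoot_cyclotomic_iff.1 hroot).eq_orderOf.symm⟩

theorem infinite_setOf_prime_dvd_orderOf {a m : ℕ} (ha : 1 < a) (ham : a.Coprime m) :
    {l : ℕ | l.Prime ∧ (a : ZMod l) ≠ 0 ∧ m ∣ orderOf (a : ZMod l)}.Infinite := by
  refine Set.infinite_of_forall_exists_gt fun N => ?_
  obtain ⟨q₁, hq₁N, hq₁⟩ := exists_infinite_primes (max N a + 1)
  obtain ⟨q₂, hq₂q₁, hq₂⟩ := exists_infinite_primes (q₁ + 1)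
  have hm0 : m ≠ 0 := by rintro rfl; exact ha.ne' (Nat.coprime_zero_right _ |>.1 ham)
  set n := m * q₁ * q₂
  have hn0 : n ≠ 0 := by simp [n, hm0, hq₁.ne_zero, hq₂.ne_zero]
  have hq₁n : q₁ ∣ n := dvd_mul_of_dvd_left (dvd_mul_left q₁ m) q₂
  have hn : ∀ {q : ℕ}, q.Prime → ∀ k : ℕ, q ^ k ≠ n :=
    prime_pow_ne_of_two_prime_dvd hq₁ hq₂ (by omega) hq₁n (dvd_mul_left q₂ (m * q₁))
  have han : a.Coprime n :=
    (ham.mul_right (coprime_of_lt_prime (by omega) (by omega) hq₁).symm).mul_right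
      (coprime_of_lt_prime (by omega) (by omega) hq₂).symm
  obtain ⟨l, hl, hord⟩ := exists_prime_orderOf_pow_totient_eq ha hn han
  have := Fact.mk hl
  have ha0 : (a : ZMod l) ≠ 0 := by
    rintro h
    rw [h, zero_pow (totient_pos.2 (pos_of_ne_zero hn0)).ne', orderOf_zero] at hord
    exact hn0 hord.symm
  have hnl : n ∣ orderOf (a : ZMod l) := hord ▸ orderOf_pow_dvd _
  have hl1 : n ≤ l - 1 := le_of_dvd (by have := hl.two_le; omega)
    (hnl.trans (ZMod.orderOf_dvd_card_sub_one ha0))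
  refine ⟨l, ⟨hl, ha0, (dvd_mul_right _ _ |>.mul_right _).trans hnl⟩, ?_⟩
  have := le_of_dvd (pos_of_ne_zero hn0) hq₁n
  omega

theorem stmt_0_general (p s0 e : ℕ) (hp : p.Prime) (hs0p : Nat.Coprime s0 p) (hep : Nat.Coprime e p) :
    {l : ℕ | l.Prime ∧ e ∣ l - 1 ∧
      ∃ s : ℕ, 0 < s ∧ s0 ∣ s ∧ orderOf ((p : ZMod l) ^ s) = e}.Infinite := by
  refine (infinite_setOf_prime_dvd_orderOf hp.one_lt (hep.mul_left hs0p).symm).mono ?_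
  rintro l ⟨hl, hp0, hdvd⟩
  have := Fact.mk hl
  set d := orderOf (p : ZMod l)
  have hdl : d ∣ l - 1 := ZMod.orderOf_dvd_card_sub_one hp0
  have hd : 0 < d := pos_of_dvd_of_pos hdl (by have := hl.two_le; omega)
  have hed : e ∣ d := dvd_of_mul_right_dvd hdvd
  exact ⟨hl, hed.trans hdl, d / e, Nat.div_pos (le_of_dvd hd hed) (pos_of_dvd_of_pos hed hd),
    (Nat.dvd_div_iff_mul_dvd hed).2 hdvd, orderOf_pow_orderOf_div hd.ne' hed⟩

/-- For a prime `p ≡ 1 (mod 4)` and positive integers `s₀, e` coprime to `p`,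
there are infinitely many primes `l` such that `e ∣ l - 1` and the multiplicative order of
`p^s` modulo `l` equals `e` for some positive multiple `s` of `s₀`. -/
theorem stmt_0 (p s0 e : ℕ) (hp : p.Prime) (hp4 : p % 4 = 1)
    (hs0 : 0 < s0) (he : 0 < e) (hs0p : Nat.Coprime s0 p) (hep : Nat.Coprime e p) :
    {l : ℕ | l.Prime ∧ e ∣ l - 1 ∧
      ∃ s : ℕ, 0 < s ∧ s0 ∣ s ∧ orderOf ((p : ZMod l) ^ s) = e}.Infinite :=
  stmt_0_general p s0 e hp hs0p hep
end

section
/- Let W be a finite group, W_L a subgroup, Γ = ⟨a⟩ a cyclic group of order e with Γ × W_L ⊆ W (a commutes with W_L). Let V = ⊕_{i ∈ ℤ/eℤ} V^{(i)} be a finite-dimensional ℂ[W_L]-module graded by ℤ/eℤ, equipped with the Γ-action where a acts on V^{(i)} by ζ^i (ζ a primitive e-th root of unity). Define the Γ × W-module Γ-Ind_{W_L}^W V = ⊕_{w ∈ W/W_L} w ⊗ V with W acting by the induced action and a acting by a(w ⊗ x) = ζ^i (wa^{−1} ⊗ x) for x ∈ V^{(i)}. Then the ζ^k-eigenspace of a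 on Γ-Ind_{W_L}^W V is isomorphic, as a W-module, to ⊕_{j ∈ ℤ/eℤ} Ind_{Γ×W_L}^W (ψ^{(−k+j)} ⊗ V^{(j)}), where ψ^{(i)} is the character of Γ with ψ^{(i)}(a) = ζ^i. -/
/-!
In the function model both modules consist of functions on `W`, and the isomorphism is mere
transposition `f ↦ (j ↦ (w ↦ f w j))`, which obviously commutes with left translation by `W`.
What has to be seen is that it matches the defining conditions. Since `K = ⟨a⟩ H`, a function is
`K`-equivariant iff it is equivariant along `H` and along `a`, because the elements along which a
function is equivariant form a submonoid. On the `j`-th component `a` acts through `σ j` by the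
scalar `ζ ^ (j - k)`, so equivariance along `a` there reads `ζ ^ j f(wa)_j = ζ ^ k f(w)_j`,
which is the `ζ ^ k`-eigenvalue condition of `Γ-Ind`.
-/

theorem pow_val_add_of_pow_eq_one {M : Type*} [Monoid M] {n : ℕ} [NeZero n] {ζ : M}
    (hζ : ζ ^ n = 1) (i j : ZMod n) : ζ ^ (i + j).val = ζ ^ i.val * ζ ^ j.val := by
  rw [← pow_add, ZMod.val_add, ← pow_eq_pow_mod _ hζ]

theorem Representation.eq_inv_apply_iff_smul_eq_smul {𝕜 G V : Type*} [Field 𝕜] [Group G]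
    [AddCommGroup V] [Module 𝕜 V] (σ : Representation 𝕜 G V) {g : G} {c d : 𝕜} (hd : d ≠ 0)
    (hg : ∀ x, σ g x = c • x) {x y : V} :
    y = σ g⁻¹ x ↔ (c * d) • y = d • x := by
  rw [eq_comm, σ.inv_apply_eq_iff, hg, mul_comm, mul_smul, smul_right_inj hd, eq_comm]

namespace Representation

variable {W R V : Type*} [Group W] [Semiring R] [AddCommMonoid V] [Module R V]
  {K : Subgroup W} (σ : Representation R K V) (F : W → V)

def equivariantSubmonoid : Submonoid K where
  carrier := {g | ∀ w, F (w * g) = σ g⁻¹ (F w)}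
  one_mem' w := by simp
  mul_mem' {g₁ g₂} h₁ h₂ w := by
    change F (w * ↑(g₁ * g₂)) = _
    rw [Subgroup.coe_mul, ← mul_assoc, h₂, h₁, mul_inv_rev, map_mul, Module.End.mul_apply]

theorem forall_mul_eq_apply_inv_iff {H : Subgroup W} (hHK : H ≤ K) {a : W} (haK : a ∈ K)
    (hgen : ∀ g ∈ K, ∃ (i : ℕ) (h : W), h ∈ H ∧ g = a ^ i * h) :
    (∀ w (g : K), F (w * g) = σ g⁻¹ (F w)) ↔
      (∀ w (h : H), F (w * h) = σ ⟨h, hHK h.2⟩⁻¹ (F w)) ∧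
        ∀ w, F (w * a) = σ ⟨a, haK⟩⁻¹ (F w) := by
  refine ⟨fun hF => ⟨fun w h => hF w ⟨h, hHK h.2⟩, fun w => hF w ⟨a, haK⟩⟩,
    fun ⟨hH, ha⟩ w g => ?_⟩
  obtain ⟨i, h, hh, hg⟩ := hgen g g.2
  have hg' : g = ⟨a, haK⟩ ^ i * ⟨h, hHK hh⟩ := Subtype.ext (by simpa using hg)
  have ha' : ⟨a, haK⟩ ∈ equivariantSubmonoid σ F := ha
  have hh' : ⟨h, hHK hh⟩ ∈ equivariantSubmonoid σ F := (hH · ⟨h, hh⟩)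
  rw [hg']
  exact mul_mem (pow_mem ha' i) hh' w

end Representation

theorem stmt_14_general {W : Type} [Group W] (H : Subgroup W) (a : W)
    (e : ℕ) [NeZero e]
    (ζ : ℂ) (hζ : IsPrimitiveRoot ζ e)
    (V : ZMod e → Type) [∀ j, AddCommGroup (V j)] [∀ j, Module ℂ (V j)]
    (ρ : ∀ j, Representation ℂ H (V j))
    (K : Subgroup W) (haK : a ∈ K) (hHK : H ≤ K)
    (hgen : ∀ g ∈ K, ∃ (i : ℕ) (h : W), h ∈ H ∧ g = a ^ i * h)
    (k : ZMod e)
    (σ : ∀ j, Representation ℂ K (V j))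
    (hσH : ∀ (j : ZMod e) (h : H), σ j (⟨(h : W), hHK h.2⟩ : K) = ρ j h)
    (hσa : ∀ (j : ZMod e) (x : V j), σ j (⟨a, haK⟩ : K) x = ζ ^ (j - k).val • x) :
    ∃ φ : (W → ∀ j, V j) →ₗ[ℂ] (∀ j, W → V j),
      Set.BijOn φ
        {f | (∀ (w : W) (h : H) (j : ZMod e),
                f (w * (h : W)) j = ρ j h⁻¹ (f w j)) ∧
             (∀ (w : W) (j : ZMod e), ζ ^ j.val • f (w * a) j = ζ ^ k.val • f w j)}
        {F | ∀ (j : ZMod e) (w : W) (g : K), F j (w * (g : W)) = σ j g⁻¹ (F j w)} ∧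
      ∀ (w' : W) (f : W → ∀ j, V j),
        ((∀ (w : W) (h : H) (j : ZMod e),
            f (w * (h : W)) j = ρ j h⁻¹ (f w j)) ∧
         (∀ (w : W) (j : ZMod e), ζ ^ j.val • f (w * a) j = ζ ^ k.val • f w j)) →
        φ (fun w => f (w'⁻¹ * w)) = fun j w => φ f j (w'⁻¹ * w) := by
  let φ : (W → ∀ j, V j) →ₗ[ℂ] (∀ j, W → V j) :=
    { toFun := Equiv.piComm _, map_add' := fun _ _ => rfl, map_smul' := fun _ _ => rfl }
  have component_iff (f : W → ∀ j, V j) (j : ZMod e) :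
      (∀ w (g : K), f (w * g) j = σ j g⁻¹ (f w j)) ↔
        (∀ w (h : H), f (w * h) j = ρ j h⁻¹ (f w j)) ∧
          ∀ w, ζ ^ j.val • f (w * a) j = ζ ^ k.val • f w j := by
    have hval : ζ ^ (j - k).val * ζ ^ k.val = ζ ^ j.val := by
      rw [← pow_val_add_of_pow_eq_one hζ.pow_eq_one, sub_add_cancel]
    rw [(σ j).forall_mul_eq_apply_inv_iff (fun w => f w j) hHK haK hgen]
    simp only [← hval, ← (σ j).eq_inv_apply_iff_smul_eq_smul
      (pow_ne_zero _ (hζ.ne_zero (NeZero.ne e))) (hσa j), ← hσH]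
    -- `⟨h, _⟩⁻¹` in `K` is definitionally `⟨(h⁻¹ : H), _⟩`
    rfl
  refine ⟨φ, ?_, fun _ _ _ => rfl⟩
  have hφ : Function.Bijective φ := (Equiv.piComm _).bijective
  convert hφ.bijOn_preimage using 1
  ext f
  change _ ↔ ∀ j w (g : K), f (w * g) j = σ j g⁻¹ (f w j)
  simp only [component_iff, forall_and]
  exact and_congr ⟨fun h j w g => h w g j, fun h w g j => h j w g⟩
    ⟨fun h j w => h w j, fun h w j => h j w⟩

/-- Lemma 3.2(ii): Let `W` be a finite group, `W_L = H` a subgroup, and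
`Γ = ⟨a⟩` cyclic of order `e` with `Γ × W_L ⊆ W` (`a` commutes with `H` and
`⟨a⟩ ∩ H = 1`).  Let `V = ⊕_{j ∈ ℤ/eℤ} V^{(j)}` be a finite-dimensional `ℤ/eℤ`-graded
`ℂ[H]`-module, with `a` acting on `V^{(j)}` by `ζ^j`.  Form the `Γ × W`-module
`Γ-Ind_{W_L}^W V` (function model: `H`-equivariant functions `W → V`, with `W` acting by
left translation and `a` acting by `(a·f)(w)_j = ζ^j f(wa)_j`, corresponding to
`a(w ⊗ x) = ζ^j (wa⁻¹ ⊗ x)` for `x ∈ V^{(j)}`).  Then the `ζ^k`-eigenspace of `a` on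
`Γ-Ind_{W_L}^W V` is isomorphic as a `W`-module to
`⊕_{j ∈ ℤ/eℤ} Ind_{Γ×W_L}^W (ψ^{(-k+j)} ⊗ V^{(j)})`, where `K = Γ × W_L ≤ W` and
`σ j` is any representation of `K` on `V^{(j)}` restricting to the given `H`-action and
with `a` acting by the scalar `ζ^{j-k}` (i.e. the module `ψ^{(-k+j)} ⊗ V^{(j)}`); the
isomorphism is realized by a `ℂ`-linear map which restricts to a `W`-equivariant
bijection between the two (sub)modules. -/
theorem stmt_14 {W : Type} [Group W] [Fintype W] (H : Subgroup W) (a : W)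
    (e : ℕ) [NeZero e] (horder : orderOf a = e)
    (hcomm : ∀ h ∈ H, a * h = h * a)
    (hdisj : ∀ i : ℕ, i < e → a ^ i ∈ H → i = 0)
    (ζ : ℂ) (hζ : IsPrimitiveRoot ζ e)
    (V : ZMod e → Type) [∀ j, AddCommGroup (V j)] [∀ j, Module ℂ (V j)]
    [∀ j, FiniteDimensional ℂ (V j)]
    (ρ : ∀ j, Representation ℂ H (V j))
    (K : Subgroup W) (haK : a ∈ K) (hHK : H ≤ K)
    (hgen : ∀ g ∈ K, ∃ (i : ℕ) (h : W), h ∈ H ∧ g = a ^ i * h)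
    (k : ZMod e)
    (σ : ∀ j, Representation ℂ K (V j))
    (hσH : ∀ (j : ZMod e) (h : H), σ j (⟨(h : W), hHK h.2⟩ : K) = ρ j h)
    (hσa : ∀ (j : ZMod e) (x : V j), σ j (⟨a, haK⟩ : K) x = ζ ^ (j - k).val • x) :
    ∃ φ : (W → ∀ j, V j) →ₗ[ℂ] (∀ j, W → V j),
      Set.BijOn φ
        {f | (∀ (w : W) (h : H) (j : ZMod e),
                f (w * (h : W)) j = ρ j h⁻¹ (f w j)) ∧
             (∀ (w : W) (j : ZMod e), ζ ^ j.val • f (w * a) j = ζ ^ k.val • f w j)}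
        {F | ∀ (j : ZMod e) (w : W) (g : K), F j (w * (g : W)) = σ j g⁻¹ (F j w)} ∧
      ∀ (w' : W) (f : W → ∀ j, V j),
        ((∀ (w : W) (h : H) (j : ZMod e),
            f (w * (h : W)) j = ρ j h⁻¹ (f w j)) ∧
         (∀ (w : W) (j : ZMod e), ζ ^ j.val • f (w * a) j = ζ ^ k.val • f w j)) →
        φ (fun w => f (w'⁻¹ * w)) = fun j w => φ f j (w'⁻¹ * w) :=
  stmt_14_general H a e ζ hζ V ρ K haK hHK hgen k σ hσH hσa
end

section
/- Let W be a finite group, W_L a subgroup, and Γ = ⟨a⟩ a cyclic subgroup of the normalizer of W_L in W of order e such that Γ and W_L generate a semidirect product W̃_L = Γ ⋉ W_L inside W. Let V be a finite-dimensional W̃_L-module with an additional Γ-grading making it a Γ × W̃_L-module. Then the ζ^k-eigenspace of the (first-factor) Γ-action on the twisted induced module Γ-Ind_{W_L}^W V has dimension [W : W̃_L] · dim V, independent of k ∈ ℤ/eℤ. -/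
/-!
Let `deg : W̃_L → ℤ/e` be the grading with `deg a = 1` and `deg W_L = 0`; it is well defined
because `a` normalizes `W_L` and `a ^ i ∉ W_L` for `0 < i < e`. Twisting the degree-`n` piece
`V_n` by the character `g ↦ ζ ^ ((n - k) deg g)` gives a representation `ρ` of `W̃_L` on `V`,
and the `ζ^k`-eigenspace is exactly the induced module `{f : W → V | ρ g (f (w g)) = f w}`.
An element of it is determined by its values on a left transversal of `W̃_L`, which can be
prescribed freely, so its dimension is `[W : W̃_L] · dim V`.
-/

/-- The `ζ^k`-eigenspace of the twisted `Γ`-action on the induced module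
`Γ-Ind_{W_L}^W V` (function model).  Here `H` plays the role of `W_L`, `K` the role of
`W̃_L = Γ ⋉ W_L` (generated by `a` and `H`), `V = ⊕_{n ∈ ℤ/eℤ} V_n` is the `Γ`-graded
`W̃_L`-module with `W̃_L`-action `τ`, and the generator `a` of `Γ` acts on the induced
module by `(a·f)(w)_n = ζ^n · τ(a)(f(wa)_n)` (corresponding to
`b(w ⊗ x) = ζ^n (wb⁻¹ ⊗ bx)` for `x` in the `ζ^n`-graded piece). -/
noncomputable def gammaIndEigen {W : Type} [Group W] (H : Subgroup W) (a : W)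
    (e : ℕ) (V : ZMod e → Type) [∀ n, AddCommGroup (V n)] [∀ n, Module ℂ (V n)]
    (K : Subgroup W) (haK : a ∈ K) (hHK : H ≤ K)
    (τ : ∀ n, Representation ℂ K (V n)) (ζ : ℂ) (k : ZMod e) :
    Submodule ℂ (W → ∀ n, V n) where
  carrier := {f |
    (∀ (w : W) (h : H) (n : ZMod e),
      f (w * (h : W)) n = τ n ((⟨(h : W), hHK h.2⟩ : K))⁻¹ (f w n)) ∧
    (∀ (w : W) (n : ZMod e),
      ζ ^ n.val • τ n (⟨a, haK⟩ : K) (f (w * a) n) = ζ ^ k.val • f w n)}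
  add_mem' := by
    intro f g hf hg
    refine ⟨fun w h n => ?_, fun w n => ?_⟩
    · simp only [Pi.add_apply, hf.1 w h n, hg.1 w h n, map_add]
    · simp only [Pi.add_apply, map_add, smul_add, hf.2 w n, hg.2 w n]
  zero_mem' := by
    refine ⟨fun w h n => ?_, fun w n => ?_⟩ <;> simp
  smul_mem' := by
    intro c f hf
    refine ⟨fun w h n => ?_, fun w n => ?_⟩
    · simp only [Pi.smul_apply, hf.1 w h n, map_smul]
    · simp only [Pi.smul_apply, map_smul, hf.2 w n]
      rw [smul_comm, hf.2 w n, smul_comm]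

namespace Representation

variable {k W X : Type*} [CommSemiring k] [Group W] [AddCommMonoid X] [Module k X]
  {K : Subgroup W} (ρ : Representation k K X)

def indSubmodule : Submodule k (W → X) where
  carrier := {f | ∀ (w : W) (g : K), ρ g (f (w * g)) = f w}
  add_mem' hf hg w g := by simp [hf w g, hg w g]
  zero_mem' := by simp
  smul_mem' c f hf w g := by simp [hf w g]

variable {ρ}

theorem mem_indSubmodule_of_closure {S : Set K} (hS : Submonoid.closure S = ⊤) {f : W → X}
    (hf : ∀ w, ∀ s ∈ S, ρ s (f (w * s)) = f w) : f ∈ ρ.indSubmodule := by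
  suffices h : ∀ g ∈ Submonoid.closure S, ∀ w, ρ g (f (w * g)) = f w from
    fun w g => h g (hS ▸ Submonoid.mem_top g) w
  intro g hg
  induction hg using Submonoid.closure_induction with
  | mem s hs => exact (hf · s hs)
  | one => simp
  | mul g g' _ _ ihg ihg' =>
    intro w
    rw [map_mul, Module.End.mul_apply, Subgroup.coe_mul, ← mul_assoc, ihg' (w * g), ihg w]

theorem apply_eq_of_mem_indSubmodule {f : W → X} (hf : f ∈ ρ.indSubmodule) (w : W) (g : K) :
    f (w * g) = ρ g⁻¹ (f w) := by
  rw [← hf w g, ← Module.End.mul_apply, ← map_mul, inv_mul_cancel, map_one, Module.End.one_apply]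

variable (ρ) {S : Set W}

noncomputable def indSubmoduleEquiv (hS : Subgroup.IsComplement S K) :
    ρ.indSubmodule ≃ₗ[k] (S → X) where
  toFun f s := f.1 s
  map_add' _ _ := rfl
  map_smul' _ _ := rfl
  invFun F := ⟨fun w => ρ (hS.equiv w).2⁻¹ (F (hS.equiv w).1), fun w g => by
    dsimp only
    rw [hS.equiv_mul_right, mul_inv_rev, ← Module.End.mul_apply, ← map_mul, mul_inv_cancel_left]⟩
  left_inv f := by
    ext w
    dsimp only
    rw [← apply_eq_of_mem_indSubmodule f.2, hS.equiv_fst_mul_equiv_snd]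
  right_inv F := by
    ext s
    dsimp only
    rw [hS.equiv_fst_eq_self_of_mem_of_one_mem K.one_mem s.2,
      hS.equiv_snd_eq_one_of_mem_of_one_mem K.one_mem s.2, K.mk_eq_one.2 rfl, inv_one,
      map_one, Module.End.one_apply]

end Representation

theorem Representation.finrank_indSubmodule {k W X : Type*} [CommRing k] [StrongRankCondition k]
    [Group W] [AddCommGroup X] [Module k X] [Module.Free k X] [Module.Finite k X]
    {K : Subgroup W} [K.FiniteIndex] (ρ : Representation k K X) :
    Module.finrank k ρ.indSubmodule = K.index * Module.finrank k X := by
  obtain ⟨S, hS, -⟩ := K.exists_isComplement_left 1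
  have : Fintype S := hS.finite_left.fintype
  rw [(ρ.indSubmoduleEquiv hS).finrank_eq, Module.finrank_pi_fintype, Finset.sum_const,
    Finset.card_univ, ← Nat.card_eq_fintype_card, hS.card_left, smul_eq_mul]

theorem pow_zmod_val_add {M : Type*} [Monoid M] {x : M} {e : ℕ} [NeZero e] (hx : x ^ e = 1)
    (m m' : ZMod e) : x ^ (m + m').val = x ^ m.val * x ^ m'.val := by
  rw [ZMod.val_add, ← pow_eq_pow_mod _ hx, pow_add]

section Degree

variable {W : Type*} [Group W] {H K : Subgroup W} {a : W} {e : ℕ}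

theorem inv_pow_mul_mul_pow_mem (hnorm : ∀ h ∈ H, a⁻¹ * h * a ∈ H) (j : ℕ) {h : W}
    (hh : h ∈ H) : (a ^ j)⁻¹ * h * a ^ j ∈ H := by
  induction j with
  | zero => simpa using hh
  | succ j ih =>
    have hconj : (a ^ (j + 1))⁻¹ * h * a ^ (j + 1) = a⁻¹ * ((a ^ j)⁻¹ * h * a ^ j) * a := by
      group
    exact hconj ▸ hnorm _ ih

theorem natCast_eq_of_pow_mul_eq_pow_mul [NeZero e] (horder : orderOf a = e)
    (hdistinct : ∀ i : ℕ, i < e → a ^ i ∈ H → i = 0) {i j : ℕ} {h h' : W} (hh : h ∈ H)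
    (hh' : h' ∈ H) (heq : a ^ i * h = a ^ j * h') : (i : ZMod e) = j := by
  have hmem : a ^ (-(i : ℤ) + j) ∈ H := by
    have : (a ^ i)⁻¹ * a ^ j = h * h'⁻¹ := by
      rw [inv_mul_eq_iff_eq_mul, ← mul_assoc, heq, mul_inv_cancel_right]
    rw [zpow_add, zpow_neg, zpow_natCast, zpow_natCast, this]
    exact H.mul_mem hh (H.inv_mem hh')
  rw [← zpow_mod_orderOf, horder] at hmem
  have he : (0 : ℤ) < e := by exact_mod_cast Nat.pos_of_ne_zero (NeZero.ne e)
  have hr0 := Int.emod_nonneg (-(i : ℤ) + j) he.ne'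
  have hre := Int.emod_lt_of_pos (-(i : ℤ) + j) he
  have hr : (((-(i : ℤ) + j) % e).toNat) = 0 :=
    hdistinct _ (by omega) (by rwa [← zpow_natCast, Int.toNat_of_nonneg hr0])
  have hcast := (ZMod.intCast_eq_intCast_iff_dvd_sub i j e).2
    (Int.dvd_of_emod_eq_zero (by rw [sub_eq_neg_add]; omega))
  exact_mod_cast hcast

variable (hgen : ∀ g ∈ K, ∃ (i : ℕ) (h : W), h ∈ H ∧ g = a ^ i * h)

theorem natCast_choose_eq_of_eq_pow_mul [NeZero e] (horder : orderOf a = e)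
    (hdistinct : ∀ i : ℕ, i < e → a ^ i ∈ H → i = 0) {g : W} (hg : g ∈ K) {i : ℕ} {h : W}
    (hh : h ∈ H) (hgi : g = a ^ i * h) : ((hgen g hg).choose : ZMod e) = i := by
  obtain ⟨h₀, hh₀, hg₀⟩ := (hgen g hg).choose_spec
  exact natCast_eq_of_pow_mul_eq_pow_mul horder hdistinct hh₀ hh (hg₀.symm.trans hgi)

/-- The power of `a` in a decomposition `g = a ^ i * h` with `h ∈ H`, read modulo `e`. -/
noncomputable def degreeHom [NeZero e] (horder : orderOf a = e)
    (hdistinct : ∀ i : ℕ, i < e → a ^ i ∈ H → i = 0) (hnorm : ∀ h ∈ H, a⁻¹ * h * a ∈ H) :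
    K →* Multiplicative (ZMod e) where
  toFun g := .ofAdd ((hgen g g.2).choose : ZMod e)
  map_one' := by
    rw [natCast_choose_eq_of_eq_pow_mul hgen horder hdistinct K.one_mem H.one_mem (i := 0)
      (by simp), Nat.cast_zero, ofAdd_zero]
  map_mul' g g' := by
    obtain ⟨i, h, hh, hg⟩ := hgen g g.2
    obtain ⟨j, h', hh', hg'⟩ := hgen g' g'.2
    have hmul : ((g * g' : K) : W) = a ^ (i + j) * ((a ^ j)⁻¹ * h * a ^ j * h') := by
      rw [Subgroup.coe_mul, hg, hg', pow_add]
      group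
    rw [natCast_choose_eq_of_eq_pow_mul hgen horder hdistinct (g * g').2
        (H.mul_mem (inv_pow_mul_mul_pow_mem hnorm j hh) hh') hmul,
      natCast_choose_eq_of_eq_pow_mul hgen horder hdistinct g.2 hh hg,
      natCast_choose_eq_of_eq_pow_mul hgen horder hdistinct g'.2 hh' hg', Nat.cast_add,
      ofAdd_add]

theorem degreeHom_apply_of_eq_pow_mul [NeZero e] (horder : orderOf a = e)
    (hdistinct : ∀ i : ℕ, i < e → a ^ i ∈ H → i = 0) (hnorm : ∀ h ∈ H, a⁻¹ * h * a ∈ H)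
    (g : K) {i : ℕ} {h : W} (hh : h ∈ H) (hgi : (g : W) = a ^ i * h) :
    degreeHom hgen horder hdistinct hnorm g = .ofAdd (i : ZMod e) :=
  congrArg Multiplicative.ofAdd (natCast_choose_eq_of_eq_pow_mul hgen horder hdistinct g.2 hh hgi)

end Degree

section GradedTwist

variable {k G : Type*} [CommSemiring k] [Monoid G] {e : ℕ} [NeZero e] {V : ZMod e → Type*}
  [∀ n, AddCommMonoid (V n)] [∀ n, Module k (V n)]

noncomputable def gradedTwistRep {ζ : k} (hζ : ζ ^ e = 1) (deg : G →* Multiplicative (ZMod e))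
    (τ : ∀ n, Representation k G (V n)) (m : ZMod e) : Representation k G (∀ n, V n) where
  toFun g := LinearMap.pi fun n =>
    ζ ^ ((n - m) * (deg g).toAdd).val • (τ n g).comp (LinearMap.proj n)
  map_one' := by ext; simp
  map_mul' g g' := by
    ext x n
    simp [mul_add, pow_zmod_val_add hζ, mul_smul]

theorem gradedTwistRep_apply {ζ : k} (hζ : ζ ^ e = 1) (deg : G →* Multiplicative (ZMod e))
    (τ : ∀ n, Representation k G (V n)) (m : ZMod e) (g : G) (x : ∀ n, V n) (n : ZMod e) :
    gradedTwistRep hζ deg τ m g x n = ζ ^ ((n - m) * (deg g).toAdd).val • τ n g (x n) :=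
  rfl

end GradedTwist

theorem gammaIndEigen_eq_indSubmodule {W : Type} [Group W] {H K : Subgroup W} {a : W} {e : ℕ}
    [NeZero e] (horder : orderOf a = e) {ζ : ℂ} (hζ : ζ ^ e = 1) (hζ₀ : ζ ≠ 0)
    {V : ZMod e → Type} [∀ n, AddCommGroup (V n)] [∀ n, Module ℂ (V n)]
    (haK : a ∈ K) (hHK : H ≤ K) (hgen : ∀ g ∈ K, ∃ (i : ℕ) (h : W), h ∈ H ∧ g = a ^ i * h)
    (hnorm : ∀ h ∈ H, a⁻¹ * h * a ∈ H) (hdistinct : ∀ i : ℕ, i < e → a ^ i ∈ H → i = 0)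
    (τ : ∀ n, Representation ℂ K (V n)) (k : ZMod e) :
    gammaIndEigen H a e V K haK hHK τ ζ k =
      (gradedTwistRep hζ (degreeHom hgen horder hdistinct hnorm) τ k).indSubmodule := by
  set ρ := gradedTwistRep hζ (degreeHom hgen horder hdistinct hnorm) τ k
  have hρH (g : K) (hg : (g : W) ∈ H) (x : ∀ n, V n) (n : ZMod e) : ρ g x n = τ n g (x n) := by
    rw [gradedTwistRep_apply, degreeHom_apply_of_eq_pow_mul hgen horder hdistinct hnorm g hg
      (i := 0) (by simp)]
    simp
  have hρa (x : ∀ n, V n) (n : ZMod e) :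
      ρ ⟨a, haK⟩ x n = ζ ^ (n - k).val • τ n ⟨a, haK⟩ (x n) := by
    rw [gradedTwistRep_apply, degreeHom_apply_of_eq_pow_mul hgen horder hdistinct hnorm _
      H.one_mem (i := 1) (by simp)]
    simp
  have hζk (n : ZMod e) : ζ ^ k.val * ζ ^ (n - k).val = ζ ^ n.val := by
    rw [← pow_zmod_val_add hζ, add_sub_cancel]
  ext f
  constructor
  · rintro ⟨hfH, hfa⟩
    refine Representation.mem_indSubmodule_of_closure
      (S := insert ⟨a, haK⟩ (H.subgroupOf K : Set K)) ?_ ?_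
    · refine eq_top_iff.2 fun g _ => ?_
      obtain ⟨i, h, hh, hg⟩ := hgen g g.2
      have hdecomp : g = ⟨a, haK⟩ ^ i * ⟨h, hHK hh⟩ := Subtype.ext (by simpa using hg)
      rw [hdecomp]
      exact mul_mem (pow_mem (Submonoid.subset_closure (Set.mem_insert _ _)) i)
        (Submonoid.subset_closure (Set.mem_insert_of_mem _ hh))
    · rintro w s (rfl | hs) <;> funext n
      · apply smul_right_injective _ (pow_ne_zero k.val hζ₀)
        dsimp only
        rw [hρa, smul_smul, hζk, hfa]
      · rw [hρH s hs, hfH w ⟨s, hs⟩ n]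
        simp
  · intro hf
    refine ⟨fun w h n => ?_, fun w n => ?_⟩
    · rw [Representation.apply_eq_of_mem_indSubmodule hf w ⟨h, hHK h.2⟩, hρH _ (H.inv_mem h.2)]
    · rw [← hf w ⟨a, haK⟩, hρa, smul_smul, hζk]

/-- formula (3.2.2): Let `W̃_L = Γ ⋉ W_L` inside the finite group `W`,
where `Γ = ⟨a⟩` is cyclic of order `e` normalizing `W_L`, and let `V` be a
finite-dimensional `W̃_L`-module with an additional `Γ`-grading making it a
`Γ × W̃_L`-module.  Then the `ζ^k`-eigenspace of the (first-factor) `Γ`-action on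
`Γ-Ind_{W_L}^W V` has dimension `[W : W̃_L] · dim V`, independent of `k`. -/
theorem stmt_15 {W : Type} [Group W] [Fintype W] (H : Subgroup W) (a : W)
    (e : ℕ) [NeZero e] (horder : orderOf a = e)
    (ζ : ℂ) (hζ : IsPrimitiveRoot ζ e)
    (V : ZMod e → Type) [∀ n, AddCommGroup (V n)] [∀ n, Module ℂ (V n)]
    [∀ n, FiniteDimensional ℂ (V n)]
    (K : Subgroup W) (haK : a ∈ K) (hHK : H ≤ K)
    (hgen : ∀ g ∈ K, ∃ (i : ℕ) (h : W), h ∈ H ∧ g = a ^ i * h)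
    (hnorm : ∀ h ∈ H, a⁻¹ * h * a ∈ H)
    (hdistinct : ∀ i : ℕ, i < e → a ^ i ∈ H → i = 0)
    (τ : ∀ n, Representation ℂ K (V n)) (k : ZMod e) :
    Module.finrank ℂ (gammaIndEigen H a e V K haK hHK τ ζ k) =
      K.index * ∑ n : ZMod e, Module.finrank ℂ (V n) := by
  rw [gammaIndEigen_eq_indSubmodule horder hζ.pow_eq_one (hζ.ne_zero (NeZero.ne e)) haK hHK
      hgen hnorm hdistinct τ k,
    Representation.finrank_indSubmodule, Module.finrank_pi_fintype]
end
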